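/- (R4) Suppose the optimal value of (CSM) with η* = 1 is zero and (CSM) admits an optimal solution (λ_o, λ_{-o}) ≠ (1, 0) (with zero slacks). Then the optimal value of the super-efficiency model (S) is at least 1. Specifically, from x_o = λ_o x_o + X_{-o} λ_{-o}, y_o = λ_o y_o + Y_{-o} λ_{-o} with λ_o < 1 (λ_o = 1 forces λ_{-o} = 0 when the columns of X are nonzero), the scaled vector λ_{-o}/(1−λ_o) together with η̃ = 1 is feasible for (S). -/

import Mathlib

open Matrix BigOperators

noncomputable section

variable {l m n : ℕ}

/-- the `i`-th column of a matrix, as a vector. -/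
def colV (X : Matrix (Fin l) (Fin n) ℝ) (i : Fin n) : Fin l → ℝ := fun j => X j i

/-- the matrix with the `o`-th column deleted (columns indexed by `{i // i ≠ o}`). -/
def del (X : Matrix (Fin l) (Fin n) ℝ) (o : Fin n) :
    Matrix (Fin l) {i : Fin n // i ≠ o} ℝ := Matrix.of fun j i => X j i.1

/-- total slack objective. -/
def slackObj (e1 : Fin l → ℝ) (e2 : Fin m → ℝ) : ℝ := (∑ j, e1 j) + (∑ k, e2 k)

/-- feasibility for the CCR slack-maximization problem (CSM) with parameter `ηs`. -/
def CSMfeas (X : Matrix (Fin l) (Fin n) ℝ) (Y : Matrix (Fin m) (Fin n) ℝ) (o : Fin n)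
    (ηs : ℝ) (lam : Fin n → ℝ) (e1 : Fin l → ℝ) (e2 : Fin m → ℝ) : Prop :=
  0 ≤ lam ∧ 0 ≤ e1 ∧ 0 ≤ e2 ∧
    colV X o - e1 = X.mulVec lam ∧ ηs • colV Y o + e2 = Y.mulVec lam

/-- attainable objective values of (CSM). -/
def CSMset (X : Matrix (Fin l) (Fin n) ℝ) (Y : Matrix (Fin m) (Fin n) ℝ) (o : Fin n)
    (ηs : ℝ) : Set ℝ :=
  {s | ∃ lam e1 e2, CSMfeas X Y o ηs lam e1 e2 ∧ s = slackObj e1 e2}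

/-- feasibility for the super-efficiency slack-maximization problem (SSM) with
parameter `ηts`. -/
def SSMfeas (X : Matrix (Fin l) (Fin n) ℝ) (Y : Matrix (Fin m) (Fin n) ℝ) (o : Fin n)
    (ηts : ℝ) (lam : {i : Fin n // i ≠ o} → ℝ) (e1 : Fin l → ℝ) (e2 : Fin m → ℝ) : Prop :=
  0 ≤ lam ∧ 0 ≤ e1 ∧ 0 ≤ e2 ∧
    colV X o - e1 = (del X o).mulVec lam ∧ ηts • colV Y o + e2 = (del Y o).mulVec lam

/-- attainable objective values of (SSM). -/
def SSMset (X : Matrix (Fin l) (Fin n) ℝ) (Y : Matrix (Fin m) (Fin n) ℝ) (o : Fin n)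
    (ηts : ℝ) : Set ℝ :=
  {s | ∃ lam e1 e2, SSMfeas X Y o ηts lam e1 e2 ∧ s = slackObj e1 e2}

/-- feasible values of the super-efficiency model (S). -/
def Sset (X : Matrix (Fin l) (Fin n) ℝ) (Y : Matrix (Fin m) (Fin n) ℝ) (o : Fin n) : Set ℝ :=
  {η | ∃ lam : {i : Fin n // i ≠ o} → ℝ, 0 ≤ lam ∧ (del X o).mulVec lam ≤ colV X o ∧
        η • colV Y o ≤ (del Y o).mulVec lam}

lemma sum_subtype_ne {n : ℕ} (o : Fin n) (f : Fin n → ℝ) :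
    (∑ i : {i : Fin n // i ≠ o}, f i.1) = (∑ i, f i) - f o := by
  have h : (∑ i : {i : Fin n // i ≠ o}, f i.1) = ∑ i ∈ Finset.univ.erase o, f i :=
    (Finset.sum_subtype (Finset.univ.erase o) (fun x => by simp [Finset.mem_erase]) f).symm
  rw [h, eq_sub_iff_add_eq, add_comm, Finset.add_sum_erase _ f (Finset.mem_univ o)]

lemma delVec {l n : ℕ} (X : Matrix (Fin l) (Fin n) ℝ) (o : Fin n) (v : Fin n → ℝ) (c : ℝ)
    (j : Fin l) :
    (del X o).mulVec (fun i => c * v i.1) j = c * (X.mulVec v j - X j o * v o) := by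
  simp only [Matrix.mulVec, dotProduct, del, Matrix.of_apply]
  have h : ∀ i : {i : Fin n // i ≠ o}, X j i.1 * (c * v i.1) = c * (X j i.1 * v i.1) :=
    fun i => by ring
  rw [Finset.sum_congr rfl (fun i _ => h i), ← Finset.mul_sum,
    sum_subtype_ne o (fun i => X j i * v i)]

/-- R4: if (CSM) with `η* = 1` has optimal value 0 attained by a
zero-slack solution `lam ≠ eₒ` (with `lam o ≤ 1` forced by feasibility, columns of `X`
nonzero and nonnegative), then `η̃ = 1` is feasible for (S), so the optimal value of
(S) is at least 1. -/
theorem stmt_10 (l m n : ℕ) (X : Matrix (Fin l) (Fin n) ℝ) (Y : Matrix (Fin m) (Fin n) ℝ)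
    (o : Fin n) (hX : ∀ j i, 0 ≤ X j i) (hY : ∀ k i, 0 ≤ Y k i)
    (hcolsX : ∀ i, colV X i ≠ 0) (hcolsY : ∀ i, colV Y i ≠ 0)
    (lam : Fin n → ℝ) (hlam : 0 ≤ lam)
    (hx : X.mulVec lam = colV X o) (hy : Y.mulVec lam = colV Y o)
    (hne : lam ≠ Pi.single o 1) (hlo : lam o ≤ 1) :
    (∃ μ : {i : Fin n // i ≠ o} → ℝ, 0 ≤ μ ∧ (del X o).mulVec μ ≤ colV X o ∧
      (1 : ℝ) • colV Y o ≤ (del Y o).mulVec μ) ∧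
    (1 : ℝ) ∈ Sset X Y o ∧
    ∀ s, IsGreatest (Sset X Y o) s → 1 ≤ s := by
  -- first show lam o < 1
  have hlt : lam o < 1 := by
    rcases lt_or_eq_of_le hlo with h | h
    · exact h
    · exfalso
      apply hne
      funext i
      by_cases hi : i = o
      · subst hi; simp [Pi.single_eq_same, h]
      · -- show lam i = 0
        have hz : ∀ j, (∑ k : {k : Fin n // k ≠ o}, X j k.1 * lam k.1) = 0 := by
          intro j
          have := congrFun hx j
          have hdel := delVec X o lam 1 j
          simp only [one_mul] at hdel
          have : (∑ k : {k : Fin n // k ≠ o}, X j k.1 * lam k.1)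
              = X.mulVec lam j - X j o * lam o := by
            rw [← hdel]
            simp only [Matrix.mulVec, dotProduct, del, Matrix.of_apply, one_mul]
          rw [this, congrFun hx j]
          simp only [colV]
          rw [h]; ring
        -- each term is nonneg
        have hterm : ∀ j, X j i * lam i = 0 := by
          intro j
          have hsum := hz j
          have hnn : ∀ k : {k : Fin n // k ≠ o}, 0 ≤ X j k.1 * lam k.1 :=
            fun k => mul_nonneg (hX j k.1) (hlam k.1)
          have := (Finset.sum_eq_zero_iff_of_nonneg (fun k _ => hnn k)).mp hsum
            ⟨i, hi⟩ (Finset.mem_univ _)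
          exact this
        obtain ⟨j, hj⟩ : ∃ j, X j i ≠ 0 := by
          by_contra hc
          push_neg at hc
          exact hcolsX i (funext fun j => by simp [colV, hc j])
        have : lam i = 0 := by
          have := hterm j
          rcases mul_eq_zero.mp this with h' | h'
          · exact absurd h' hj
          · exact h'
        simp [Pi.single_eq_of_ne hi, this]
  -- build μ
  set c : ℝ := (1 - lam o)⁻¹ with hc
  have hc0 : 0 < 1 - lam o := by linarith
  have hcpos : 0 < c := inv_pos.mpr hc0
  set μ : {i : Fin n // i ≠ o} → ℝ := fun i => c * lam i.1 with hμ
  have hμ0 : 0 ≤ μ := fun i => mul_nonneg hcpos.le (hlam i.1)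
  have hXeq : (del X o).mulVec μ = colV X o := by
    funext j
    rw [hμ, delVec X o lam c j, congrFun hx j]
    show c * (X j o - X j o * lam o) = X j o
    have h2 : X j o - X j o * lam o = (1 - lam o) * X j o := by ring
    rw [hc, h2, inv_mul_cancel_left₀ hc0.ne']
  have hYeq : (del Y o).mulVec μ = colV Y o := by
    funext k
    rw [hμ, delVec Y o lam c k, congrFun hy k]
    show c * (Y k o - Y k o * lam o) = Y k o
    have h2 : Y k o - Y k o * lam o = (1 - lam o) * Y k o := by ring
    rw [hc, h2, inv_mul_cancel_left₀ hc0.ne']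
  have hmem : (1 : ℝ) ∈ Sset X Y o := by
    refine ⟨μ, hμ0, ?_, ?_⟩
    · rw [hXeq]
    · rw [hYeq, one_smul]
  refine ⟨⟨μ, hμ0, le_of_eq hXeq, by rw [hYeq, one_smul]⟩, hmem, ?_⟩
  intro s hs
  exact hs.2 hmem
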